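/- Let L > 0, N ≥ 1 an integer, 0 < m < L/(2N), and set z_i = iL/N for i ∈ ℤ. Let A = {(0,z) : |z − z_i| > m for all i ∈ ℤ} be the axis minus the horizon segments, and let U = {(ρ,z) : ρ > 0} ∪ A. Let σ, ω be continuous on U and continuously differentiable on {ρ > 0}, L-periodic in z, and for every i ∈ ℤ satisfy σ(ρ, 2z_i − z) = σ(ρ, z) and ω(ρ, 2z_i − z) = −ω(ρ, z) (equidistant, identical, co-rotating black hole data). Set η = ρ²e^σ, P = (ρ/4)(σ_ρ² − σ_z²) + (ρ/(4η²))(ω_ρ² − ω_z²), Q = (ρ/2)(σ_ρσ_z + η^{−2}ω_ρω_z), and assume P and Q extend continuously to U with Q(0,z) = 0 for all (0,z) ∈ A. Let q : U → ℝ be continuous on U, continuously differentiable on {ρ > 0}, with ∂_ρ q = P and ∂_z q = Q there. Then q is constant on A; in particular, if q vanishes at one point of the axis set A then q vanishes on all of A, so the solution has no angle defects (struts) on any axis component. -/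

import Mathlib

/-- Partial derivative with respect to the first (ρ) variable. -/
noncomputable def pdr (f : ℝ × ℝ → ℝ) (p : ℝ × ℝ) : ℝ :=
  deriv (fun x => f (x, p.2)) p.1

/-- Partial derivative with respect to the second (z) variable. -/
noncomputable def pdz (f : ℝ × ℝ → ℝ) (p : ℝ × ℝ) : ℝ :=
  deriv (fun y => f (p.1, y)) p.2

/-!
σ even and ω odd about each horizon center `z_i` make `Q` odd about `z_i`, so
`z ↦ q(ρ, 2 z_i - z) - q(ρ, z)` has zero derivative and vanishes at `z_i`: `q` is even about
every `z_i`, and by continuity so is its restriction to the axis. On an axis component `[a, b]`,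
`q(ρ, b) - q(ρ, a) = ∫ₐᵇ Q(ρ, t) dt` tends to `∫ₐᵇ Q(0, t) dt = 0` as `ρ → 0`, so `q` is constant
there. The reflection about `z_{j+1}` carries the `j`-th axis component onto the `(j+1)`-th, hence
all these constants agree.
-/

open Filter Set Topology

section PartialDerivatives

variable {f g : ℝ × ℝ → ℝ} {p : ℝ × ℝ}

theorem hasDerivAt_pdz (hf : DifferentiableAt ℝ f p) :
    HasDerivAt (fun y => f (p.1, y)) (pdz f p) p.2 := by
  have hline : HasDerivAt (fun y : ℝ => (p.1, y)) ((0 : ℝ), (1 : ℝ)) p.2 :=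
    (hasDerivAt_const _ _).prodMk (hasDerivAt_id _)
  have h := hf.hasFDerivAt.comp_hasDerivAt p.2 hline
  rwa [show pdz f p = fderiv ℝ f p (0, 1) from h.deriv]

theorem pdr_congr (h : f =ᶠ[𝓝 p] g) : pdr f p = pdr g p :=
  EventuallyEq.deriv_eq <|
    ((continuous_id.prodMk continuous_const).tendsto p.1).eventually h

theorem pdz_congr (h : f =ᶠ[𝓝 p] g) : pdz f p = pdz g p :=
  EventuallyEq.deriv_eq <|
    ((continuous_const.prodMk continuous_id).tendsto p.2).eventually h

theorem pdr_neg : pdr (-f) p = -pdr f p := deriv.neg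

theorem pdz_neg : pdz (-f) p = -pdz f p := deriv.neg

theorem pdr_comp_reflect (c : ℝ) :
    pdr (fun p => f (p.1, 2 * c - p.2)) p = pdr f (p.1, 2 * c - p.2) := rfl

theorem pdz_comp_reflect (c : ℝ) :
    pdz (fun p => f (p.1, 2 * c - p.2)) p = -pdz f (p.1, 2 * c - p.2) :=
  deriv_comp_const_sub (fun y => f (p.1, y)) _ _

end PartialDerivatives

section Reflection

variable {f : ℝ × ℝ → ℝ} {p : ℝ × ℝ} {c : ℝ}

theorem pdr_pdz_reflect_of_even (h : (fun p => f (p.1, 2 * c - p.2)) =ᶠ[𝓝 p] f) :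
    pdr f (p.1, 2 * c - p.2) = pdr f p ∧ pdz f (p.1, 2 * c - p.2) = -pdz f p :=
  ⟨pdr_congr h, by rw [← pdz_congr h, pdz_comp_reflect, neg_neg]⟩

theorem pdr_pdz_reflect_of_odd (h : (fun p => f (p.1, 2 * c - p.2)) =ᶠ[𝓝 p] -f) :
    pdr f (p.1, 2 * c - p.2) = -pdr f p ∧ pdz f (p.1, 2 * c - p.2) = pdz f p := by
  constructor
  · rw [← pdr_neg, ← pdr_congr h, pdr_comp_reflect]
  · rw [← neg_neg (pdz f p), ← pdz_neg, ← pdz_congr h, pdz_comp_reflect, neg_neg]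

theorem reflect_eq_neg_of_even_of_odd {σ ω η Q : ℝ × ℝ → ℝ} (hp : 0 < p.1)
    (hQ : ∀ p : ℝ × ℝ, 0 < p.1 →
      Q p = p.1 / 2 * (pdr σ p * pdz σ p + pdr ω p * pdz ω p / (η p) ^ 2))
    (hσ : (fun p => σ (p.1, 2 * c - p.2)) =ᶠ[𝓝 p] σ)
    (hω : (fun p => ω (p.1, 2 * c - p.2)) =ᶠ[𝓝 p] -ω)
    (hη : η (p.1, 2 * c - p.2) = η p) :
    Q (p.1, 2 * c - p.2) = -Q p := by
  obtain ⟨hσr, hσz⟩ := pdr_pdz_reflect_of_even hσ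
  obtain ⟨hωr, hωz⟩ := pdr_pdz_reflect_of_odd hω
  rw [hQ (p.1, 2 * c - p.2) hp, hQ p hp, hσr, hσz, hωr, hωz, hη]
  ring

theorem apply_reflect_eq_of_hasDerivAt_odd {f f' : ℝ → ℝ} (hf : ∀ y, HasDerivAt f (f' y) y)
    (hodd : ∀ y, f' (2 * c - y) = -f' y) (z : ℝ) : f (2 * c - z) = f z := by
  have hg : ∀ y, HasDerivAt (fun w => f (2 * c - w) - f w) 0 y := fun y => by
    have h := ((hf (2 * c - y)).comp y ((hasDerivAt_id y).const_sub (2 * c))).sub (hf y)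
    rwa [hodd, neg_mul_neg, mul_one, sub_self] at h
  have h := is_const_of_deriv_eq_zero (fun y => (hg y).differentiableAt) (fun y => (hg y).deriv) z c
  rw [show 2 * c - c = c by ring, sub_self] at h
  exact sub_eq_zero.1 h

end Reflection

theorem continuousOn_intervalIntegral_of_continuousOn_prod {X E : Type*} [TopologicalSpace X]
    [FirstCountableTopology X] [NormedAddCommGroup E] [NormedSpace ℝ E] {F : X × ℝ → E}
    {K : Set X} (hK : IsCompact K) {a b : ℝ} (hF : ContinuousOn F (K ×ˢ uIcc a b)) :
    ContinuousOn (fun x => ∫ t in a..b, F (x, t)) K := by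
  obtain ⟨C, hC⟩ := (hK.prod isCompact_uIcc).exists_bound_of_continuousOn hF
  have hslice : ∀ x ∈ K, ContinuousOn (fun t => F (x, t)) (uIcc a b) := fun x hx =>
    hF.comp (continuousOn_const.prodMk continuousOn_id) fun t ht => ⟨hx, ht⟩
  intro x hx
  refine intervalIntegral.continuousWithinAt_of_dominated_interval (bound := fun _ => C)
    (eventually_mem_nhdsWithin.mono fun y hy => ?_) (eventually_mem_nhdsWithin.mono fun y hy => ?_)
    intervalIntegrable_const (MeasureTheory.ae_of_all _ fun t ht => ?_)
  · exact ((hslice y hy).mono uIoc_subset_uIcc).aestronglyMeasurable measurableSet_uIoc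
  · exact MeasureTheory.ae_of_all _ fun t ht => hC (y, t) ⟨hy, uIoc_subset_uIcc ht⟩
  · exact ContinuousWithinAt.comp (f := fun y => (y, t)) (hF (x, t) ⟨hx, uIoc_subset_uIcc ht⟩)
      (continuous_id.prodMk continuous_const).continuousWithinAt
      fun y hy => ⟨hy, uIoc_subset_uIcc ht⟩

section Axis

variable {q Q : ℝ × ℝ → ℝ} {U : Set (ℝ × ℝ)}

theorem tendsto_nhdsGT_zero_slice (hU : {p : ℝ × ℝ | 0 < p.1} ⊆ U) (hq : ContinuousOn q U)
    {z : ℝ} (hz : ((0 : ℝ), z) ∈ U) :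
    Tendsto (fun ρ : ℝ => q (ρ, z)) (𝓝[>] 0) (𝓝 (q (0, z))) := by
  have hmaps : MapsTo (fun ρ : ℝ => (ρ, z)) (Ioi 0) U := fun _ hρ => hU hρ
  exact (ContinuousWithinAt.comp (x := 0) (hq _ hz)
    (continuous_id.prodMk continuous_const).continuousWithinAt hmaps).tendsto

theorem axis_eq_of_forall_pos_eq (hU : {p : ℝ × ℝ | 0 < p.1} ⊆ U) (hq : ContinuousOn q U)
    {z z' : ℝ} (hz : ((0 : ℝ), z) ∈ U) (hz' : ((0 : ℝ), z') ∈ U)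
    (h : ∀ ρ > 0, q (ρ, z) = q (ρ, z')) : q (0, z) = q (0, z') := by
  refine tendsto_nhds_unique ((tendsto_nhdsGT_zero_slice hU hq hz).congr' ?_)
    (tendsto_nhdsGT_zero_slice hU hq hz')
  filter_upwards [self_mem_nhdsWithin] with ρ hρ using h ρ hρ

theorem axis_eq_of_hasDerivAt_slice (hU : {p : ℝ × ℝ | 0 < p.1} ⊆ U) (hq : ContinuousOn q U)
    (hQ : ContinuousOn Q U) (hqQ : ∀ ρ > 0, ∀ z, HasDerivAt (fun y => q (ρ, y)) (Q (ρ, z)) z)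
    {a b : ℝ} (haxis : ∀ t ∈ uIcc a b, ((0 : ℝ), t) ∈ U ∧ Q (0, t) = 0) :
    q (0, a) = q (0, b) := by
  have hK : Icc 0 1 ×ˢ uIcc a b ⊆ U := by
    rintro ⟨ρ, t⟩ ⟨hρ, ht⟩
    rcases hρ.1.eq_or_lt with rfl | hρ
    exacts [(haxis t ht).1, hU hρ]
  have hFTC : ∀ ρ > 0, ∫ t in a..b, Q (ρ, t) = q (ρ, b) - q (ρ, a) := fun ρ hρ =>
    intervalIntegral.integral_eq_sub_of_hasDerivAt (fun t _ => hqQ ρ hρ t) <|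
      ContinuousOn.intervalIntegrable <|
        hQ.comp (continuousOn_const.prodMk continuousOn_id) fun _ _ => hU hρ
  have hint_zero : ∫ t in a..b, Q (0, t) = 0 := by
    rw [intervalIntegral.integral_congr fun t ht => (haxis t ht).2, intervalIntegral.integral_zero]
  have hlim_int : Tendsto (fun ρ : ℝ => ∫ t in a..b, Q (ρ, t)) (𝓝[>] 0) (𝓝 0) := by
    have h := ((continuousOn_intervalIntegral_of_continuousOn_prod isCompact_Icc (hQ.mono hK)) 0
      ⟨le_rfl, zero_le_one⟩).mono_of_mem_nhdsWithin (Icc_mem_nhdsGT one_pos) |>.tendsto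
    rwa [hint_zero] at h
  have hlim_q := (tendsto_nhdsGT_zero_slice hU hq (haxis b right_mem_uIcc).1).sub
    (tendsto_nhdsGT_zero_slice hU hq (haxis a left_mem_uIcc).1)
  have hq_diff : (fun ρ : ℝ => ∫ t in a..b, Q (ρ, t)) =ᶠ[𝓝[>] 0]
      fun ρ => q (ρ, b) - q (ρ, a) := by
    filter_upwards [self_mem_nhdsWithin] with ρ hρ using hFTC ρ hρ
  have h := tendsto_nhds_unique (hlim_int.congr' hq_diff) hlim_q
  exact (sub_eq_zero.1 h.symm).symm

end Axis

/-- The `z`-coordinates of the axis set `A` when the horizon centers are the multiples of `d`. -/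
def axisSet (d m : ℝ) : Set ℝ := {z | ∀ i : ℤ, m < |z - i * d|}

section AxisSet

variable {d m : ℝ}

theorem Ioo_subset_axisSet (hd : 0 ≤ d) (j : ℤ) :
    Ioo (j * d + m) ((j + 1) * d - m) ⊆ axisSet d m := by
  intro z ⟨hz₁, hz₂⟩ i
  rcases le_or_gt i j with hij | hij
  · have : (i : ℝ) * d ≤ j * d := mul_le_mul_of_nonneg_right (Int.cast_le.2 hij) hd
    exact lt_of_lt_of_le (by linarith) (le_abs_self _)
  · have : ((j : ℝ) + 1) * d ≤ i * d :=
      mul_le_mul_of_nonneg_right (by exact_mod_cast Int.add_one_le_iff.2 hij) hd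
    exact lt_of_lt_of_le (by linarith) (neg_le_abs _)

theorem exists_Ioo_of_mem_axisSet (hd : 0 < d) {z : ℝ} (hz : z ∈ axisSet d m) :
    ∃ j : ℤ, z ∈ Ioo (j * d + m) ((j + 1) * d - m) := by
  set j := ⌊z / d⌋
  have hj₁ : (j : ℝ) * d ≤ z := (le_div_iff₀ hd).1 (Int.floor_le _)
  have hj₂ : z < (j + 1) * d := (div_lt_iff₀ hd).1 (Int.lt_floor_add_one _)
  have hm₁ := hz j
  have hm₂ := hz (j + 1)
  rw [abs_of_nonneg (by linarith)] at hm₁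
  rw [Int.cast_add, Int.cast_one, abs_of_neg (by linarith)] at hm₂
  exact ⟨j, by linarith, by linarith⟩

theorem apply_eq_of_mem_axisSet {g : ℝ → ℝ} (hd : 0 < d) (hmd : m < d / 2)
    (hrefl : ∀ i : ℤ, ∀ z ∈ axisSet d m, 2 * (i * d) - z ∈ axisSet d m →
      g (2 * (i * d) - z) = g z)
    (hconn : ∀ a b, uIcc a b ⊆ axisSet d m → g a = g b) {z : ℝ} (hz : z ∈ axisSet d m) :
    g z = g (d / 2) := by
  have hmid : ∀ j : ℤ, j * d + d / 2 ∈ Ioo (j * d + m) ((j + 1) * d - m) := fun j =>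
    ⟨by linarith, by linarith⟩
  have hcomp : ∀ j : ℤ, ∀ z ∈ Ioo (j * d + m) ((j + 1) * d - m), g z = g (j * d + d / 2) :=
    fun j z hz => hconn _ _ <| ordConnected_Ioo.uIcc_subset hz (hmid j) |>.trans <|
      Ioo_subset_axisSet hd.le j
  have hmem : ∀ j : ℤ, j * d + d / 2 ∈ axisSet d m := fun j => Ioo_subset_axisSet hd.le j (hmid j)
  have hstep : ∀ j : ℤ, g ((j + 1 : ℤ) * d + d / 2) = g (j * d + d / 2) := fun j => by
    have hswap : 2 * ((j + 1 : ℤ) * d) - (j * d + d / 2) = (j + 1 : ℤ) * d + d / 2 := by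
      push_cast; ring
    rw [← hswap]
    exact hrefl _ _ (hmem j) (hswap ▸ hmem (j + 1))
  have hall : ∀ j : ℤ, g (j * d + d / 2) = g (d / 2) := by
    intro j
    induction j using Int.induction_on with
    | zero => simp
    | succ k ih => rw [hstep, ih]
    | pred k ih => rw [← ih, ← hstep, sub_add_cancel]
  obtain ⟨j, hj⟩ := exists_Ioo_of_mem_axisSet hd hz
  rw [hcomp j z hj, hall j]

end AxisSet

theorem q_constant_on_axis_corotating_general
    (L : ℝ) (hL : 0 < L) (N : ℕ) (hN : 1 ≤ N) (m : ℝ)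
    (hmL : m < L / (2 * N))
    (A : Set (ℝ × ℝ))
    (hA : A = {p : ℝ × ℝ | p.1 = 0 ∧ ∀ i : ℤ, m < |p.2 - (i : ℝ) * L / N|})
    (U : Set (ℝ × ℝ))
    (hUdef : U = {p : ℝ × ℝ | 0 < p.1} ∪ A)
    (σ ω : ℝ × ℝ → ℝ)
    (hσsym : ∀ i : ℤ, ∀ p ∈ U, σ (p.1, 2 * ((i : ℝ) * L / N) - p.2) = σ p)
    (hωsym : ∀ i : ℤ, ∀ p ∈ U, ω (p.1, 2 * ((i : ℝ) * L / N) - p.2) = - ω p)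
    (η Q : ℝ × ℝ → ℝ)
    (hη : ∀ p, η p = p.1 ^ 2 * Real.exp (σ p))
    (hQ : ∀ p : ℝ × ℝ, 0 < p.1 →
      Q p = p.1 / 2 * (pdr σ p * pdz σ p + pdr ω p * pdz ω p / (η p) ^ 2))
    (hQcont : ContinuousOn Q U)
    (hQaxis : ∀ p ∈ A, Q p = 0)
    (q : ℝ × ℝ → ℝ)
    (hqcont : ContinuousOn q U)
    (hqC1 : ContDiffOn ℝ 1 q {p : ℝ × ℝ | 0 < p.1})
    (hqz : ∀ p : ℝ × ℝ, 0 < p.1 → pdz q p = Q p) :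
    (∀ p ∈ A, ∀ p' ∈ A, q p = q p')
      ∧ ((∃ p ∈ A, q p = 0) → ∀ p ∈ A, q p = 0) := by
  set d := L / N
  have hd : 0 < d := div_pos hL (by exact_mod_cast hN)
  have hmd : m < d / 2 := by rwa [div_div, mul_comm]
  have hdiv : ∀ i : ℤ, (i : ℝ) * L / N = i * d := fun i => mul_div_assoc ..
  simp only [hdiv] at hA hσsym hωsym
  have hA' : ∀ {p : ℝ × ℝ}, p ∈ A ↔ p.1 = 0 ∧ p.2 ∈ axisSet d m := by simp [hA, axisSet]
  have hHU : {p : ℝ × ℝ | 0 < p.1} ⊆ U := hUdef ▸ subset_union_left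
  have hAU : ∀ {z}, z ∈ axisSet d m → ((0 : ℝ), z) ∈ U := fun hz =>
    hUdef ▸ Or.inr (hA'.2 ⟨rfl, hz⟩)
  have hHopen : IsOpen {p : ℝ × ℝ | 0 < p.1} := isOpen_lt continuous_const continuous_fst
  have hQodd : ∀ (i : ℤ) (p : ℝ × ℝ), 0 < p.1 → Q (p.1, 2 * (i * d) - p.2) = -Q p :=
    fun i p hp => reflect_eq_neg_of_even_of_odd hp hQ
      ((hHopen.eventually_mem hp).mono fun p' hp' => hσsym i p' (hHU hp'))
      ((hHopen.eventually_mem hp).mono fun p' hp' => hωsym i p' (hHU hp'))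
      (by rw [hη, hη, hσsym i p (hHU hp)])
  have hslice : ∀ ρ > 0, ∀ z, HasDerivAt (fun y => q (ρ, y)) (Q (ρ, z)) z := fun ρ hρ z =>
    hqz (ρ, z) hρ ▸ hasDerivAt_pdz (p := (ρ, z))
      ((hqC1.differentiableOn one_ne_zero).differentiableAt (hHopen.mem_nhds hρ))
  have hq_axis : ∀ z ∈ axisSet d m, q (0, z) = q (0, d / 2) :=
    fun z hz => apply_eq_of_mem_axisSet (g := fun z => q (0, z)) hd hmd
      (fun i z hz hz' => axis_eq_of_forall_pos_eq hHU hqcont (hAU hz') (hAU hz) fun ρ hρ =>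
        apply_reflect_eq_of_hasDerivAt_odd (hslice ρ hρ) (fun y => hQodd i (ρ, y) hρ) z)
      (fun a b hab => axis_eq_of_hasDerivAt_slice hHU hqcont hQcont hslice fun t ht =>
        ⟨hAU (hab ht), hQaxis _ (hA'.2 ⟨rfl, hab ht⟩)⟩) hz
  have hq_A : ∀ p ∈ A, q p = q (0, d / 2) := fun p hp => by
    rw [← hq_axis p.2 (hA'.1 hp).2, ← (hA'.1 hp).1]
  exact ⟨fun p hp p' hp' => by rw [hq_A p hp, hq_A p' hp'],
    fun ⟨p, hp, hp0⟩ p' hp' => by rw [hq_A p' hp', ← hq_A p hp, hp0]⟩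

/-- for periodic equidistant identical co-rotating data (σ even and ω
odd about each horizon center z_i = iL/N), the metric function q is constant on
the axis set A; in particular if q vanishes at one point of A it vanishes on all
of A, so there are no struts on any axis component. -/
theorem q_constant_on_axis_corotating
    (L : ℝ) (hL : 0 < L) (N : ℕ) (hN : 1 ≤ N) (m : ℝ)
    (hm : 0 < m) (hmL : m < L / (2 * N))
    (A : Set (ℝ × ℝ))
    (hA : A = {p : ℝ × ℝ | p.1 = 0 ∧ ∀ i : ℤ, m < |p.2 - (i : ℝ) * L / N|})
    (U : Set (ℝ × ℝ))
    (hUdef : U = {p : ℝ × ℝ | 0 < p.1} ∪ A)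
    (σ ω : ℝ × ℝ → ℝ)
    (hσcont : ContinuousOn σ U) (hωcont : ContinuousOn ω U)
    (hσC1 : ContDiffOn ℝ 1 σ {p : ℝ × ℝ | 0 < p.1})
    (hωC1 : ContDiffOn ℝ 1 ω {p : ℝ × ℝ | 0 < p.1})
    (hσper : ∀ p ∈ U, σ (p.1, p.2 + L) = σ p)
    (hωper : ∀ p ∈ U, ω (p.1, p.2 + L) = ω p)
    (hσsym : ∀ i : ℤ, ∀ p ∈ U, σ (p.1, 2 * ((i : ℝ) * L / N) - p.2) = σ p)
    (hωsym : ∀ i : ℤ, ∀ p ∈ U, ω (p.1, 2 * ((i : ℝ) * L / N) - p.2) = - ω p)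
    (η P Q : ℝ × ℝ → ℝ)
    (hη : ∀ p, η p = p.1 ^ 2 * Real.exp (σ p))
    (hP : ∀ p : ℝ × ℝ, 0 < p.1 →
      P p = p.1 / 4 * ((pdr σ p) ^ 2 - (pdz σ p) ^ 2)
        + p.1 / (4 * (η p) ^ 2) * ((pdr ω p) ^ 2 - (pdz ω p) ^ 2))
    (hQ : ∀ p : ℝ × ℝ, 0 < p.1 →
      Q p = p.1 / 2 * (pdr σ p * pdz σ p + pdr ω p * pdz ω p / (η p) ^ 2))
    (hPcont : ContinuousOn P U) (hQcont : ContinuousOn Q U)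
    (hQaxis : ∀ p ∈ A, Q p = 0)
    (q : ℝ × ℝ → ℝ)
    (hqcont : ContinuousOn q U)
    (hqC1 : ContDiffOn ℝ 1 q {p : ℝ × ℝ | 0 < p.1})
    (hqr : ∀ p : ℝ × ℝ, 0 < p.1 → pdr q p = P p)
    (hqz : ∀ p : ℝ × ℝ, 0 < p.1 → pdz q p = Q p) :
    (∀ p ∈ A, ∀ p' ∈ A, q p = q p')
      ∧ ((∃ p ∈ A, q p = 0) → ∀ p ∈ A, q p = 0) :=
  q_constant_on_axis_corotating_general L hL N hN m hmL A hA U hUdef σ ω hσsym hωsym η Q hη hQ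
    hQcont hQaxis q hqcont hqC1 hqz
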